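/- Let n be a positive integer, let A and B be diagonal positive definite real n×n matrices, and let a, b ∈ ℝⁿ. For λ ∈ [0,1] define m_λ = (λA + (1−λ)B)⁻¹(λA a + (1−λ)B b). If for some λ̃ ∈ [0,1] the point m_{λ̃} lies in neither ellipsoid, i.e., ‖m_{λ̃} − a‖_A > 1 and ‖m_{λ̃} − b‖_B > 1, then there exists no λ ∈ [0,1] such that m_λ lies simultaneously in both ellipsoids E(A, a) and E(B, b). (This is the correctness certificate returned by the bisection search: a single point m_{λ̃} outside both ellipsoids certifies that no point on the path m_λ witnesses intersection.) -/

import Mathlib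

open Matrix

/-- The path point `m_λ = (λA + (1-λ)B)⁻¹ (λA a + (1-λ)B b)`. -/
noncomputable def mPath {n : ℕ} (A B : Matrix (Fin n) (Fin n) ℝ) (a b : Fin n → ℝ)
    (lam : ℝ) : Fin n → ℝ :=
  (lam • A + (1 - lam) • B)⁻¹ *ᵥ (lam • (A *ᵥ a) + (1 - lam) • (B *ᵥ b))

/-- The norm `‖w‖_M = √(wᵀ M w)`. -/
noncomputable def matNorm {n : ℕ} (M : Matrix (Fin n) (Fin n) ℝ) (w : Fin n → ℝ) : ℝ :=
  Real.sqrt (w ⬝ᵥ (M *ᵥ w))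

/-- The ellipsoid `E(M, m) = {x | ‖x - m‖_M ≤ 1}`. -/
noncomputable def ellipsoid {n : ℕ} (M : Matrix (Fin n) (Fin n) ℝ) (m : Fin n → ℝ) :
    Set (Fin n → ℝ) :=
  {x | matNorm M (x - m) ≤ 1}

/-!
For diagonal `A = diag α`, `B = diag β`, the path is coordinatewise
`(m_λ - b)ᵢ = wᵢ(λ) (aᵢ - bᵢ)` with `wᵢ(λ) = λαᵢ / (λαᵢ + (1 - λ)βᵢ) ∈ [0, 1]` increasing in `λ`,
so `‖m_λ - b‖_B` increases along `[0, 1]`; since `m_λ(A, B, a, b) = m_{1-λ}(B, A, b, a)`,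
`‖m_λ - a‖_A` decreases. Hence every `λ ≥ λ̃` leaves `E(B, b)` and every `λ ≤ λ̃` leaves `E(A, a)`.
-/

open Set

lemma convex_combination_pos {p q lam : ℝ} (hp : 0 < p) (hq : 0 < q) (h0 : 0 ≤ lam)
    (h1 : lam ≤ 1) :
    0 < lam * p + (1 - lam) * q := by
  nlinarith [mul_nonneg h0 hp.le, mul_nonneg (sub_nonneg.2 h1) hq.le]

lemma monotoneOn_mul_div_convex_combination {p q : ℝ} (hp : 0 < p) (hq : 0 < q) :
    MonotoneOn (fun lam => lam * p / (lam * p + (1 - lam) * q)) (Icc 0 1) := by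
  intro lam ⟨hl0, hl1⟩ mu ⟨hm0, hm1⟩ hle
  rw [div_le_div_iff₀ (convex_combination_pos hp hq hl0 hl1)
    (convex_combination_pos hp hq hm0 hm1)]
  nlinarith [mul_nonneg (mul_nonneg hp.le hq.le) (sub_nonneg.2 hle)]

theorem Matrix.inv_diagonal_of_ne_zero {ι α : Type*} [Fintype ι] [DecidableEq ι] [Field α]
    {v : ι → α} (hv : ∀ i, v i ≠ 0) : (diagonal v)⁻¹ = diagonal v⁻¹ := by
  refine inv_eq_right_inv ?_
  rw [diagonal_mul_diagonal, ← diagonal_one]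
  exact congrArg diagonal (funext fun i => mul_inv_cancel₀ (hv i))

theorem mPath_comm {n : ℕ} (A B : Matrix (Fin n) (Fin n) ℝ) (a b : Fin n → ℝ) (lam : ℝ) :
    mPath A B a b lam = mPath B A b a (1 - lam) := by
  simp only [mPath, sub_sub_cancel, add_comm]

theorem mPath_diagonal_apply {n : ℕ} {dA dB : Fin n → ℝ} {lam : ℝ}
    (hD : ∀ i, lam * dA i + (1 - lam) * dB i ≠ 0) (a b : Fin n → ℝ) (i : Fin n) :
    mPath (diagonal dA) (diagonal dB) a b lam i =
      (lam * dA i * a i + (1 - lam) * dB i * b i) / (lam * dA i + (1 - lam) * dB i) := by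
  have hM : lam • diagonal dA + (1 - lam) • diagonal dB =
      diagonal fun i => lam * dA i + (1 - lam) * dB i := by
    rw [← diagonal_smul, ← diagonal_smul, diagonal_add]
    rfl
  rw [mPath, hM, inv_diagonal_of_ne_zero hD]
  simp only [mulVec_diagonal, Pi.add_apply, Pi.smul_apply, Pi.inv_apply, smul_eq_mul]
  ring

theorem mPath_diagonal_sub_right_apply {n : ℕ} {dA dB : Fin n → ℝ} {lam : ℝ}
    (hD : ∀ i, lam * dA i + (1 - lam) * dB i ≠ 0) (a b : Fin n → ℝ) (i : Fin n) :
    (mPath (diagonal dA) (diagonal dB) a b lam - b) i =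
      lam * dA i / (lam * dA i + (1 - lam) * dB i) * (a i - b i) := by
  rw [Pi.sub_apply, mPath_diagonal_apply hD, div_mul_eq_mul_div, div_sub' (hD i),
    div_left_inj' (hD i)]
  ring

theorem matNorm_diagonal {n : ℕ} (d w : Fin n → ℝ) :
    matNorm (diagonal d) w = √(∑ i, d i * w i ^ 2) := by
  rw [matNorm, dotProduct]
  congr 1
  exact Finset.sum_congr rfl fun i _ => by rw [mulVec_diagonal]; ring

theorem matNorm_diagonal_le_of_abs_le {n : ℕ} {d u v : Fin n → ℝ} (hd : ∀ i, 0 ≤ d i)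
    (huv : ∀ i, |u i| ≤ |v i|) : matNorm (diagonal d) u ≤ matNorm (diagonal d) v := by
  rw [matNorm_diagonal, matNorm_diagonal]
  exact Real.sqrt_le_sqrt <| Finset.sum_le_sum fun i _ =>
    mul_le_mul_of_nonneg_left (sq_le_sq.2 (huv i)) (hd i)

theorem monotoneOn_matNorm_mPath_sub_right {n : ℕ} {dA dB : Fin n → ℝ} (hdA : ∀ i, 0 < dA i)
    (hdB : ∀ i, 0 < dB i) (a b : Fin n → ℝ) :
    MonotoneOn (fun lam => matNorm (diagonal dB) (mPath (diagonal dA) (diagonal dB) a b lam - b))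
      (Icc 0 1) := by
  intro lam ⟨hl0, hl1⟩ mu ⟨hm0, hm1⟩ hle
  have hD (t : ℝ) (h0 : 0 ≤ t) (h1 : t ≤ 1) (i : Fin n) :=
    convex_combination_pos (hdA i) (hdB i) h0 h1
  refine matNorm_diagonal_le_of_abs_le (fun i => (hdB i).le) fun i => ?_
  rw [mPath_diagonal_sub_right_apply (fun i => (hD lam hl0 hl1 i).ne'),
    mPath_diagonal_sub_right_apply (fun i => (hD mu hm0 hm1 i).ne'), abs_mul, abs_mul]
  refine mul_le_mul_of_nonneg_right (abs_le_abs_of_nonneg ?_ ?_) (abs_nonneg _)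
  · exact div_nonneg (mul_nonneg hl0 (hdA i).le) (hD lam hl0 hl1 i).le
  · exact monotoneOn_mul_div_convex_combination (hdA i) (hdB i) ⟨hl0, hl1⟩ ⟨hm0, hm1⟩ hle

theorem antitoneOn_matNorm_mPath_sub_left {n : ℕ} {dA dB : Fin n → ℝ} (hdA : ∀ i, 0 < dA i)
    (hdB : ∀ i, 0 < dB i) (a b : Fin n → ℝ) :
    AntitoneOn (fun lam => matNorm (diagonal dA) (mPath (diagonal dA) (diagonal dB) a b lam - a))
      (Icc 0 1) := by
  intro lam ⟨hl0, hl1⟩ mu ⟨hm0, hm1⟩ hle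
  simp only [mPath_comm (diagonal dA)]
  exact monotoneOn_matNorm_mPath_sub_right hdB hdA b a ⟨by linarith, by linarith⟩
    ⟨by linarith, by linarith⟩ (by linarith)

theorem mPath_certificate_no_intersection_witness_general {n : ℕ}
    (A B : Matrix (Fin n) (Fin n) ℝ) (dA dB : Fin n → ℝ)
    (hA : A = Matrix.diagonal dA) (hB : B = Matrix.diagonal dB)
    (hdA : ∀ i, 0 < dA i) (hdB : ∀ i, 0 < dB i)
    (a b : Fin n → ℝ)
    (ltil : ℝ) (h0 : 0 ≤ ltil) (h1 : ltil ≤ 1)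
    (houtA : 1 < matNorm A (mPath A B a b ltil - a))
    (houtB : 1 < matNorm B (mPath A B a b ltil - b)) :
    ¬ ∃ lam : ℝ, 0 ≤ lam ∧ lam ≤ 1 ∧
        mPath A B a b lam ∈ ellipsoid A a ∩ ellipsoid B b := by
  subst hA hB
  rintro ⟨lam, hl0, hl1, hinA, hinB⟩
  rcases le_total ltil lam with hle | hle
  · exact (houtB.trans_le (monotoneOn_matNorm_mPath_sub_right hdA hdB a b ⟨h0, h1⟩
      ⟨hl0, hl1⟩ hle)).not_ge hinB
  · exact (houtA.trans_le (antitoneOn_matNorm_mPath_sub_left hdA hdB a b ⟨hl0, hl1⟩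
      ⟨h0, h1⟩ hle)).not_ge hinA

theorem mPath_certificate_no_intersection_witness {n : ℕ} (hn : 0 < n)
    (A B : Matrix (Fin n) (Fin n) ℝ) (dA dB : Fin n → ℝ)
    (hA : A = Matrix.diagonal dA) (hB : B = Matrix.diagonal dB)
    (hdA : ∀ i, 0 < dA i) (hdB : ∀ i, 0 < dB i)
    (a b : Fin n → ℝ)
    (ltil : ℝ) (h0 : 0 ≤ ltil) (h1 : ltil ≤ 1)
    (houtA : 1 < matNorm A (mPath A B a b ltil - a))
    (houtB : 1 < matNorm B (mPath A B a b ltil - b)) :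
    ¬ ∃ lam : ℝ, 0 ≤ lam ∧ lam ≤ 1 ∧
        mPath A B a b lam ∈ ellipsoid A a ∩ ellipsoid B b :=
  mPath_certificate_no_intersection_witness_general A B dA dB hA hB hdA hdB a b ltil h0 h1 houtA
    houtB
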